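/- arXiv:1803.10033 — 6 statements merged into one kernel-verified Lean document; each statement's English description precedes it below -/
import Mathlib

section
/- Let H be a separable Hilbert space, K ∈ L(H) a bounded idempotent operator with closed range, and {(W_i, v_i)}_{i∈I} a K-fusion frame for H with bounds A, B, such that K†(closure of K(W_i)) ⊆ W_i for all i. Then {(K W_i, v_i)}_{i∈I} is a K-fusion frame for H, with lower bound A/‖K‖² and upper bound B‖K†‖²‖K‖². -/
/-!
Write `V i` for the closure of `K (W i)` and `T*` for the adjoint. Since `K` maps `W i` into `V i`,
taking adjoints gives `P_{W i} K* P_{V i} = P_{W i} K*`, hence `‖P_{W i} K* f‖ ≤ ‖K‖ ‖P_{V i} f‖`.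
Since `range K` is closed, `V i ⊆ range K`, on which `K Kd` is the identity; with `Kd (V i) ⊆ W i`
the same identity for `Kd` gives `P_{V i} f = P_{V i} Kd* P_{W i} K* f`, hence
`‖P_{V i} f‖ ≤ ‖Kd‖ ‖P_{W i} K* f‖`. Both frame inequalities then follow by applying those of
`{(W i, v i)}` to `K* f`, using `K* K* = K*`.
-/

open Submodule ContinuousLinearMap
open scoped InnerProduct

section Operators

variable {𝕜 E F : Type*} [RCLike 𝕜] [NormedAddCommGroup E] [InnerProductSpace 𝕜 E]
  [NormedAddCommGroup F] [InnerProductSpace 𝕜 F]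

theorem topologicalClosure_map_le_range {T : E →L[𝕜] F} (hT : IsClosed (Set.range T))
    (W : Submodule 𝕜 E) :
    (W.map (T : E →ₗ[𝕜] F)).topologicalClosure ≤ LinearMap.range (T : E →ₗ[𝕜] F) :=
  topologicalClosure_minimal _ LinearMap.map_le_range (by rwa [LinearMap.coe_range, coe_coe])

variable [CompleteSpace E] [CompleteSpace F]

theorem starProjection_comp_adjoint_comp_starProjection_of_map_le {T : E →L[𝕜] F}
    {W : Submodule 𝕜 E} {V : Submodule 𝕜 F} [W.HasOrthogonalProjection]
    [V.HasOrthogonalProjection] (h : W.map (T : E →ₗ[𝕜] F) ≤ V) :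
    W.starProjection ∘L T† ∘L V.starProjection = W.starProjection ∘L T† := by
  have hT : V.starProjection ∘L T ∘L W.starProjection = T ∘L W.starProjection := by
    ext x
    exact starProjection_eq_self_iff.mpr (h (mem_map_of_mem (W.starProjection_apply_mem x)))
  apply adjoint.injective
  simpa [adjoint_comp, (isSelfAdjoint_starProjection _).adjoint_eq, comp_assoc] using hT

theorem starProjection_comp_adjoint_of_eqOn {U : E →L[𝕜] E} {V : Submodule 𝕜 E}
    [V.HasOrthogonalProjection] (h : ∀ x ∈ V, U x = x) :
    V.starProjection ∘L U† = V.starProjection := by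
  have hU : U ∘L V.starProjection = V.starProjection := by
    ext x
    exact h _ (V.starProjection_apply_mem x)
  apply adjoint.injective
  simpa [adjoint_comp, (isSelfAdjoint_starProjection _).adjoint_eq] using hU

theorem norm_starProjection_adjoint_apply_le (T : E →L[𝕜] F) (W : Submodule 𝕜 E)
    [W.HasOrthogonalProjection] (y : F) : ‖W.starProjection ((T†) y)‖ ≤ ‖T‖ * ‖y‖ :=
  calc ‖W.starProjection ((T†) y)‖ ≤ ‖(T†) y‖ := W.norm_starProjection_apply_le _
    _ ≤ ‖T†‖ * ‖y‖ := le_opNorm _ _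
    _ = ‖T‖ * ‖y‖ := by rw [adjoint.norm_map]

end Operators

section WeightedSums

variable {ι : Type*}

theorem tsum_le_mul_tsum_of_le_mul {s t : ι → ℝ} (hs : ∀ i, 0 ≤ s i) (ht : ∀ i, 0 ≤ t i)
    {c d : ℝ} (hts : ∀ i, t i ≤ c * s i) (hst : ∀ i, s i ≤ d * t i) :
    ∑' i, t i ≤ c * ∑' i, s i := by
  by_cases hsum : Summable s
  · calc ∑' i, t i ≤ ∑' i, c * s i :=
          ((hsum.mul_left c).of_nonneg_of_le ht hts).tsum_le_tsum hts (hsum.mul_left c)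
      _ = c * ∑' i, s i := tsum_mul_left
  -- `hst` makes `s` and `t` summable together, so otherwise both sums are the junk value `0`.
  · have htsum : ¬Summable t := fun h => hsum (.of_nonneg_of_le hs hst (h.mul_left d))
    simp [tsum_eq_zero_of_not_summable hsum, tsum_eq_zero_of_not_summable htsum]

theorem tsum_mul_sq_le_sq_mul_tsum (v : ι → ℝ) {a b : ι → ℝ} (ha : ∀ i, 0 ≤ a i)
    (hb : ∀ i, 0 ≤ b i) {c d : ℝ} (hab : ∀ i, a i ≤ c * b i) (hba : ∀ i, b i ≤ d * a i) :
    ∑' i, v i ^ 2 * a i ^ 2 ≤ c ^ 2 * ∑' i, v i ^ 2 * b i ^ 2 := by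
  have weighted_sq_le {x y : ι → ℝ} {k : ℝ} (hx : ∀ i, 0 ≤ x i) (hxy : ∀ i, x i ≤ k * y i)
      (i : ι) : v i ^ 2 * x i ^ 2 ≤ k ^ 2 * (v i ^ 2 * y i ^ 2) :=
    calc v i ^ 2 * x i ^ 2 ≤ v i ^ 2 * (k * y i) ^ 2 := by
          gcongr
          · exact hx i
          · exact hxy i
      _ = k ^ 2 * (v i ^ 2 * y i ^ 2) := by ring
  exact tsum_le_mul_tsum_of_le_mul (fun i => by positivity) (fun i => by positivity)
    (weighted_sq_le ha hab) (weighted_sq_le hb hba)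

end WeightedSums

theorem kfusion_image_is_kfusion_general
    {H : Type*} [NormedAddCommGroup H] [InnerProductSpace ℂ H] [CompleteSpace H]
    {I : Type*}
    (K Kd : H →L[ℂ] H)
    (hidem : K ∘L K = K)
    (hclosed : IsClosed (Set.range K))
    -- Moore-Penrose axioms characterizing `Kd = K†`
    (hmp1 : K ∘L Kd ∘L K = K)
    (W : I → Submodule ℂ H) [∀ i, HasOrthogonalProjection (W i)]
    (v : I → ℝ)
    (A B : ℝ) (hB : 0 < B)
    (hlow : ∀ f : H, A * ‖ContinuousLinearMap.adjoint K f‖ ^ 2 ≤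
      ∑' i, (v i) ^ 2 * ‖(orthogonalProjection (W i) f : H)‖ ^ 2)
    (hup : ∀ f : H, (∑' i, (v i) ^ 2 * ‖(orthogonalProjection (W i) f : H)‖ ^ 2) ≤ B * ‖f‖ ^ 2)
    (hsub : ∀ i, (((W i).map (K : H →ₗ[ℂ] H)).topologicalClosure).map (Kd : H →ₗ[ℂ] H) ≤ W i) :
    ∀ f : H,
      (A / ‖K‖ ^ 2) * ‖ContinuousLinearMap.adjoint K f‖ ^ 2 ≤
        ∑' i, (v i) ^ 2 *
          ‖(orthogonalProjection (((W i).map (K : H →ₗ[ℂ] H)).topologicalClosure) f : H)‖ ^ 2 ∧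
      (∑' i, (v i) ^ 2 *
          ‖(orthogonalProjection (((W i).map (K : H →ₗ[ℂ] H)).topologicalClosure) f : H)‖ ^ 2) ≤
        B * ‖Kd‖ ^ 2 * ‖K‖ ^ 2 * ‖f‖ ^ 2 := by
  intro f
  simp only [coe_orthogonalProjectionOnto_apply] at hlow hup ⊢
  set V := fun i => ((W i).map (K : H →ₗ[ℂ] H)).topologicalClosure
  have hKKd (i : I) : ∀ x ∈ V i, (K ∘L Kd) x = x := by
    rintro _ hx
    obtain ⟨y, rfl⟩ := topologicalClosure_map_le_range hclosed (W i) hx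
    exact congr($hmp1 y)
  have hWV (i : I) : ‖(W i).starProjection ((K†) f)‖ ≤ ‖K‖ * ‖(V i).starProjection f‖ := by
    have h := congr($(starProjection_comp_adjoint_comp_starProjection_of_map_le
      ((W i).map (K : H →ₗ[ℂ] H)).le_topologicalClosure) f)
    simp only [comp_apply] at h
    rw [← h]
    exact norm_starProjection_adjoint_apply_le K (W i) _
  have hVW (i : I) : ‖(V i).starProjection f‖ ≤ ‖Kd‖ * ‖(W i).starProjection ((K†) f)‖ := by
    have h₁ := congr($(starProjection_comp_adjoint_of_eqOn (hKKd i)) f)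
    have h₂ := congr($(starProjection_comp_adjoint_comp_starProjection_of_map_le (hsub i))
      ((K†) f))
    simp only [comp_apply, adjoint_comp] at h₁ h₂
    rw [← h₁, ← h₂]
    exact norm_starProjection_adjoint_apply_le Kd (V i) _
  have hWV_sum := tsum_mul_sq_le_sq_mul_tsum v (fun _ => norm_nonneg _) (fun _ => norm_nonneg _)
    hWV hVW
  have hVW_sum := tsum_mul_sq_le_sq_mul_tsum v (fun _ => norm_nonneg _) (fun _ => norm_nonneg _)
    hVW hWV
  have hadj : K† ∘L K† = K† := by rw [← adjoint_comp, hidem]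
  constructor
  · rw [div_mul_eq_mul_div]
    refine div_le_of_le_mul₀ (sq_nonneg _) (tsum_nonneg fun _ => by positivity) ?_
    calc A * ‖(K†) f‖ ^ 2 = A * ‖(K†) ((K†) f)‖ ^ 2 := by rw [← comp_apply, hadj]
      _ ≤ ∑' i, v i ^ 2 * ‖(W i).starProjection ((K†) f)‖ ^ 2 := hlow _
      _ ≤ _ := by linarith
  · calc ∑' i, v i ^ 2 * ‖(V i).starProjection f‖ ^ 2
        ≤ ‖Kd‖ ^ 2 * ∑' i, v i ^ 2 * ‖(W i).starProjection ((K†) f)‖ ^ 2 := hVW_sum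
      _ ≤ ‖Kd‖ ^ 2 * (B * ‖(K†) f‖ ^ 2) := by gcongr; exact hup _
      _ ≤ ‖Kd‖ ^ 2 * (B * (‖K‖ * ‖f‖) ^ 2) := by
          gcongr
          simpa using (K†).le_opNorm f
      _ = B * ‖Kd‖ ^ 2 * ‖K‖ ^ 2 * ‖f‖ ^ 2 := by ring

/-- Under the same hypotheses, `{(K (W i), v i)}` is a `K`-fusion frame
with lower bound `A / ‖K‖²` and upper bound `B ‖K†‖² ‖K‖²`.  (Each `K (W i)` is closed, so
we may express the projections via the topological closure of `K (W i)`.) -/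
theorem kfusion_image_is_kfusion
    {H : Type*} [NormedAddCommGroup H] [InnerProductSpace ℂ H] [CompleteSpace H]
    [TopologicalSpace.SeparableSpace H] {I : Type*}
    (K Kd : H →L[ℂ] H)
    (hidem : K ∘L K = K)
    (hclosed : IsClosed (Set.range K))
    -- Moore-Penrose axioms characterizing `Kd = K†`
    (hmp1 : K ∘L Kd ∘L K = K)
    (hmp2 : Kd ∘L K ∘L Kd = Kd)
    (hmp3 : ContinuousLinearMap.adjoint (K ∘L Kd) = K ∘L Kd)
    (hmp4 : ContinuousLinearMap.adjoint (Kd ∘L K) = Kd ∘L K)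
    (W : I → Submodule ℂ H) [∀ i, HasOrthogonalProjection (W i)]
    (v : I → ℝ) (hv : ∀ i, 0 < v i)
    (A B : ℝ) (hA : 0 < A) (hB : 0 < B)
    (hlow : ∀ f : H, A * ‖ContinuousLinearMap.adjoint K f‖ ^ 2 ≤
      ∑' i, (v i) ^ 2 * ‖(orthogonalProjection (W i) f : H)‖ ^ 2)
    (hup : ∀ f : H, (∑' i, (v i) ^ 2 * ‖(orthogonalProjection (W i) f : H)‖ ^ 2) ≤ B * ‖f‖ ^ 2)
    (hsub : ∀ i, (((W i).map (K : H →ₗ[ℂ] H)).topologicalClosure).map (Kd : H →ₗ[ℂ] H) ≤ W i) :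
    ∀ f : H,
      (A / ‖K‖ ^ 2) * ‖ContinuousLinearMap.adjoint K f‖ ^ 2 ≤
        ∑' i, (v i) ^ 2 *
          ‖(orthogonalProjection (((W i).map (K : H →ₗ[ℂ] H)).topologicalClosure) f : H)‖ ^ 2 ∧
      (∑' i, (v i) ^ 2 *
          ‖(orthogonalProjection (((W i).map (K : H →ₗ[ℂ] H)).topologicalClosure) f : H)‖ ^ 2) ≤
        B * ‖Kd‖ ^ 2 * ‖K‖ ^ 2 * ‖f‖ ^ 2 :=
  kfusion_image_is_kfusion_general K Kd hidem hclosed hmp1 W v A B hB hlow hup hsub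
end

section
/- Let K ∈ L(H) have closed range and {(W_i, v_i)}_{i∈I} be a K-fusion frame for H with bounds A, B. Let J ⊆ I with C := Σ_{i∈J} v_i² < ∞ and A − C‖K†‖² > 0. Then for all f ∈ R(K), (A − C‖K†‖²)‖K*f‖² ≤ Σ_{i∈I∖J} v_i²‖P_{W_i}f‖² ≤ B‖f‖², i.e., {(W_i, v_i)}_{i∈I∖J} is a K-fusion frame for R(K). -/
/-!
For `f ∈ R(K)` the Moore–Penrose identities `K K† K = K` and `(K K†)* = K K†` give
`f = (K†)* K* f`, hence `‖f‖ ≤ ‖K†‖ ‖K* f‖`. Projections are contractions, so the erased part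
`∑_{i ∈ J} v_i² ‖P_{W_i} f‖²` is at most `C ‖f‖² ≤ C ‖K†‖² ‖K* f‖²`; subtracting it from the
lower frame bound gives the new lower bound, while dropping nonnegative terms keeps the upper one.
-/

open Submodule ContinuousLinearMap

theorem ContinuousLinearMap.apply_apply_eq_self_of_mem_range {R M N : Type*} [Semiring R]
    [AddCommMonoid M] [Module R M] [TopologicalSpace M]
    [AddCommMonoid N] [Module R N] [TopologicalSpace N]
    {K : M →L[R] N} {Kd : N →L[R] M} (hmp1 : K ∘L Kd ∘L K = K) {f : N}
    (hf : f ∈ Set.range K) : K (Kd f) = f := by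
  obtain ⟨x, rfl⟩ := hf
  exact congr($hmp1 x)

section PseudoInverse

variable {𝕜 E F : Type*} [RCLike 𝕜]
  [NormedAddCommGroup E] [InnerProductSpace 𝕜 E] [CompleteSpace E]
  [NormedAddCommGroup F] [InnerProductSpace 𝕜 F] [CompleteSpace F]
  {K : E →L[𝕜] F} {Kd : F →L[𝕜] E} {f : F}

theorem adjoint_apply_adjoint_apply_eq_self_of_mem_range (hmp1 : K ∘L Kd ∘L K = K)
    (hmp3 : adjoint (K ∘L Kd) = K ∘L Kd) (hf : f ∈ Set.range K) :
    adjoint Kd (adjoint K f) = f := by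
  rw [← comp_apply, ← adjoint_comp, hmp3, comp_apply,
    apply_apply_eq_self_of_mem_range hmp1 hf]

theorem norm_le_norm_mul_norm_adjoint_apply_of_mem_range (hmp1 : K ∘L Kd ∘L K = K)
    (hmp3 : adjoint (K ∘L Kd) = K ∘L Kd) (hf : f ∈ Set.range K) :
    ‖f‖ ≤ ‖Kd‖ * ‖adjoint K f‖ :=
  calc ‖f‖ = ‖adjoint Kd (adjoint K f)‖ := by
        rw [adjoint_apply_adjoint_apply_eq_self_of_mem_range hmp1 hmp3 hf]
    _ ≤ ‖adjoint Kd‖ * ‖adjoint K f‖ := le_opNorm _ _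
    _ = ‖Kd‖ * ‖adjoint K f‖ := by rw [adjoint.norm_map]

end PseudoInverse

section Subtype

variable {ι : Type*} {g : ι → ℝ}

theorem tsum_sub_tsum_subtype_le_tsum_subtype_compl (hg : ∀ i, 0 ≤ g i) (s : Set ι) :
    ∑' i, g i - ∑' i : s, g i ≤ ∑' i : ↑sᶜ, g i := by
  by_cases h : Summable g
  · rw [← h.tsum_subtype_add_tsum_subtype_compl s, add_sub_cancel_left]
  · have hs : 0 ≤ ∑' i : s, g i := tsum_nonneg fun i => hg i
    have hsc : 0 ≤ ∑' i : ↑sᶜ, g i := tsum_nonneg fun i => hg i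
    rw [tsum_eq_zero_of_not_summable h]
    linarith

-- Without summability on `s`, the sum over `sᶜ` could be finite while the full sum is junk `0`.
theorem tsum_subtype_compl_le_tsum (hg : ∀ i, 0 ≤ g i) {s : Set ι}
    (hs : Summable fun i : s => g i) : ∑' i : ↑sᶜ, g i ≤ ∑' i, g i := by
  by_cases h : Summable g
  · exact h.tsum_subtype_le g sᶜ hg
  · have hsc : ¬Summable fun i : ↑sᶜ => g i := mt hs.summable_compl_iff.mp h
    rw [tsum_eq_zero_of_not_summable h, tsum_eq_zero_of_not_summable hsc]

end Subtype

section Projection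

variable {𝕜 E ι : Type*} [RCLike 𝕜] [NormedAddCommGroup E] [InnerProductSpace 𝕜 E]
  (W : ι → Submodule 𝕜 E) [∀ i, HasOrthogonalProjection (W i)] {v : ι → ℝ}

theorem sq_mul_norm_orthogonalProjection_apply_le (i : ι) (f : E) :
    v i ^ 2 * ‖(orthogonalProjectionOnto (W i) f : E)‖ ^ 2 ≤ v i ^ 2 * ‖f‖ ^ 2 := by
  gcongr
  exact norm_orthogonalProjectionOnto_apply_le _ f

theorem summable_sq_mul_norm_orthogonalProjection (hv : Summable fun i => v i ^ 2) (f : E) :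
    Summable fun i => v i ^ 2 * ‖(orthogonalProjectionOnto (W i) f : E)‖ ^ 2 :=
  .of_nonneg_of_le (fun _ => by positivity) (sq_mul_norm_orthogonalProjection_apply_le W · f)
    (hv.mul_right _)

theorem tsum_sq_mul_norm_orthogonalProjection_le {C : ℝ} (hC : HasSum (fun i => v i ^ 2) C)
    (f : E) : ∑' i, v i ^ 2 * ‖(orthogonalProjectionOnto (W i) f : E)‖ ^ 2 ≤ C * ‖f‖ ^ 2 :=
  hasSum_le (sq_mul_norm_orthogonalProjection_apply_le W · f)
    (summable_sq_mul_norm_orthogonalProjection W hC.summable f).hasSum (hC.mul_right _)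

end Projection

theorem kfusion_erasure_general
    {H : Type*} [NormedAddCommGroup H] [InnerProductSpace ℂ H] [CompleteSpace H]
    {I : Type*}
    (K Kd : H →L[ℂ] H)
    -- Moore-Penrose axioms characterizing `Kd = K†`
    (hmp1 : K ∘L Kd ∘L K = K)
    (hmp3 : ContinuousLinearMap.adjoint (K ∘L Kd) = K ∘L Kd)
    (W : I → Submodule ℂ H) [∀ i, HasOrthogonalProjection (W i)]
    (v : I → ℝ)
    (A B : ℝ)
    (hlow : ∀ f : H, A * ‖ContinuousLinearMap.adjoint K f‖ ^ 2 ≤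
      ∑' i, (v i) ^ 2 * ‖(orthogonalProjection (W i) f : H)‖ ^ 2)
    (hup : ∀ f : H, (∑' i, (v i) ^ 2 * ‖(orthogonalProjection (W i) f : H)‖ ^ 2) ≤ B * ‖f‖ ^ 2)
    (J : Set I) (C : ℝ)
    (hC : HasSum (fun i : J => (v i) ^ 2) C) :
    ∀ f ∈ Set.range K,
      (A - C * ‖Kd‖ ^ 2) * ‖ContinuousLinearMap.adjoint K f‖ ^ 2 ≤
        ∑' i : {i : I // i ∉ J}, (v i.1) ^ 2 * ‖(orthogonalProjection (W i.1) f : H)‖ ^ 2 ∧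
      (∑' i : {i : I // i ∉ J}, (v i.1) ^ 2 * ‖(orthogonalProjection (W i.1) f : H)‖ ^ 2) ≤
        B * ‖f‖ ^ 2 := by
  intro f hf
  set g : I → ℝ := fun i => v i ^ 2 * ‖(orthogonalProjection (W i) f : H)‖ ^ 2
  have hg : ∀ i, 0 ≤ g i := fun i => by positivity
  have hC0 : 0 ≤ C := hC.nonneg fun i => sq_nonneg _
  have hJ : ∑' i : J, g i ≤ C * ‖Kd‖ ^ 2 * ‖adjoint K f‖ ^ 2 :=
    calc ∑' i : J, g i ≤ C * ‖f‖ ^ 2 := tsum_sq_mul_norm_orthogonalProjection_le (fun i : J => W i) hC f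
      _ ≤ C * (‖Kd‖ * ‖adjoint K f‖) ^ 2 := by
        gcongr
        exact norm_le_norm_mul_norm_adjoint_apply_of_mem_range hmp1 hmp3 hf
      _ = C * ‖Kd‖ ^ 2 * ‖adjoint K f‖ ^ 2 := by ring
  constructor
  · calc (A - C * ‖Kd‖ ^ 2) * ‖adjoint K f‖ ^ 2 ≤ ∑' i, g i - ∑' i : J, g i := by
          linarith [hlow f]
      _ ≤ ∑' i : ↑Jᶜ, g i := tsum_sub_tsum_subtype_le_tsum_subtype_compl hg J
  · exact (tsum_subtype_compl_le_tsum hg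
      (summable_sq_mul_norm_orthogonalProjection (fun i : J => W i) hC.summable f)).trans (hup f)

/-- Erasures.  If `K` has closed range with Moore-Penrose pseudo-inverse `Kd`,
`{(W i, v i)}` is a `K`-fusion frame with bounds `A, B`, `J ⊆ I` with `C = Σ_{i∈J} v i ²`
and `A − C‖K†‖² > 0`, then `{(W i, v i)}_{i∉J}` is a `K`-fusion frame for `R(K)` with
bounds `A − C‖K†‖²` and `B`. -/
theorem kfusion_erasure
    {H : Type*} [NormedAddCommGroup H] [InnerProductSpace ℂ H] [CompleteSpace H]
    {I : Type*}
    (K Kd : H →L[ℂ] H)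
    (hclosed : IsClosed (Set.range K))
    -- Moore-Penrose axioms characterizing `Kd = K†`
    (hmp1 : K ∘L Kd ∘L K = K)
    (hmp2 : Kd ∘L K ∘L Kd = Kd)
    (hmp3 : ContinuousLinearMap.adjoint (K ∘L Kd) = K ∘L Kd)
    (hmp4 : ContinuousLinearMap.adjoint (Kd ∘L K) = Kd ∘L K)
    (W : I → Submodule ℂ H) [∀ i, HasOrthogonalProjection (W i)]
    (v : I → ℝ) (hv : ∀ i, 0 < v i)
    (A B : ℝ) (hA : 0 < A) (hB : 0 < B)
    (hlow : ∀ f : H, A * ‖ContinuousLinearMap.adjoint K f‖ ^ 2 ≤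
      ∑' i, (v i) ^ 2 * ‖(orthogonalProjection (W i) f : H)‖ ^ 2)
    (hup : ∀ f : H, (∑' i, (v i) ^ 2 * ‖(orthogonalProjection (W i) f : H)‖ ^ 2) ≤ B * ‖f‖ ^ 2)
    (J : Set I) (C : ℝ)
    (hC : HasSum (fun i : J => (v i) ^ 2) C)
    (hpos : 0 < A - C * ‖Kd‖ ^ 2) :
    ∀ f ∈ Set.range K,
      (A - C * ‖Kd‖ ^ 2) * ‖ContinuousLinearMap.adjoint K f‖ ^ 2 ≤
        ∑' i : {i : I // i ∉ J}, (v i.1) ^ 2 * ‖(orthogonalProjection (W i.1) f : H)‖ ^ 2 ∧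
      (∑' i : {i : I // i ∉ J}, (v i.1) ^ 2 * ‖(orthogonalProjection (W i.1) f : H)‖ ^ 2) ≤
        B * ‖f‖ ^ 2 :=
  kfusion_erasure_general K Kd hmp1 hmp3 W v A B hlow hup J C hC
end

section
/- Let K₁, K₂ ∈ L(H) and a ≥ 0, 0 ≤ b < 1 satisfy ‖(K₁* − K₂*)f‖ ≤ a‖K₁*f‖ + b‖K₂*f‖ for all f ∈ H. If {(W_i, v_i)}_{i∈I} is a K₁-fusion frame for H with bounds A, B, then it is a K₂-fusion frame for H with bounds A((1−b)/(1+a))² and B. -/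
open Submodule ContinuousLinearMap

theorem one_sub_mul_norm_le_of_norm_sub_le {E : Type*} [SeminormedAddCommGroup E] {x y : E}
    {a b : ℝ} (h : ‖x - y‖ ≤ a * ‖x‖ + b * ‖y‖) : (1 - b) * ‖y‖ ≤ (1 + a) * ‖x‖ := by
  have hy : ‖y‖ ≤ ‖x‖ + ‖x - y‖ := by
    simpa [norm_sub_rev] using norm_le_norm_add_norm_sub' y x
  linarith

theorem div_mul_norm_le_of_norm_sub_le {E : Type*} [SeminormedAddCommGroup E] {x y : E}
    {a b : ℝ} (ha : 0 ≤ a) (h : ‖x - y‖ ≤ a * ‖x‖ + b * ‖y‖) :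
    (1 - b) / (1 + a) * ‖y‖ ≤ ‖x‖ := by
  rw [div_mul_eq_mul_div, div_le_iff₀ (by linarith), mul_comm ‖x‖]
  exact one_sub_mul_norm_le_of_norm_sub_le h

theorem mul_sq_norm_le_of_norm_sub_le {E : Type*} [SeminormedAddCommGroup E] {x y : E}
    {a b A S : ℝ} (ha : 0 ≤ a) (hb : b < 1) (hA : 0 ≤ A)
    (h : ‖x - y‖ ≤ a * ‖x‖ + b * ‖y‖) (hlow : A * ‖x‖ ^ 2 ≤ S) :
    A * ((1 - b) / (1 + a)) ^ 2 * ‖y‖ ^ 2 ≤ S := by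
  have hc : 0 ≤ (1 - b) / (1 + a) * ‖y‖ := by
    have : 0 ≤ (1 - b) / (1 + a) := div_nonneg (by linarith) (by linarith)
    positivity
  calc A * ((1 - b) / (1 + a)) ^ 2 * ‖y‖ ^ 2 = A * ((1 - b) / (1 + a) * ‖y‖) ^ 2 := by ring
    _ ≤ A * ‖x‖ ^ 2 := by gcongr; exact div_mul_norm_le_of_norm_sub_le ha h
    _ ≤ S := hlow

theorem kfusion_perturb_operator_general
    {H : Type*} [NormedAddCommGroup H] [InnerProductSpace ℂ H] [CompleteSpace H]
    {I : Type*}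
    (K₁ K₂ : H →L[ℂ] H) (a b : ℝ) (ha : 0 ≤ a) (hb1 : b < 1)
    (hpert : ∀ f : H,
      ‖ContinuousLinearMap.adjoint K₁ f - ContinuousLinearMap.adjoint K₂ f‖ ≤
        a * ‖ContinuousLinearMap.adjoint K₁ f‖ + b * ‖ContinuousLinearMap.adjoint K₂ f‖)
    (W : I → Submodule ℂ H) [∀ i, HasOrthogonalProjection (W i)]
    (v : I → ℝ)
    (A B : ℝ) (hA : 0 < A)
    (hlow : ∀ f : H, A * ‖ContinuousLinearMap.adjoint K₁ f‖ ^ 2 ≤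
      ∑' i, (v i) ^ 2 * ‖(orthogonalProjection (W i) f : H)‖ ^ 2)
    (hup : ∀ f : H, (∑' i, (v i) ^ 2 * ‖(orthogonalProjection (W i) f : H)‖ ^ 2) ≤ B * ‖f‖ ^ 2) :
    ∀ f : H,
      A * ((1 - b) / (1 + a)) ^ 2 * ‖ContinuousLinearMap.adjoint K₂ f‖ ^ 2 ≤
        ∑' i, (v i) ^ 2 * ‖(orthogonalProjection (W i) f : H)‖ ^ 2 ∧
      (∑' i, (v i) ^ 2 * ‖(orthogonalProjection (W i) f : H)‖ ^ 2) ≤ B * ‖f‖ ^ 2 :=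
  fun f => ⟨mul_sq_norm_le_of_norm_sub_le ha hb1 hA.le (hpert f) (hlow f), hup f⟩

/-- Perturbation of the operator.  If `‖(K₁* − K₂*)f‖ ≤ a‖K₁*f‖ + b‖K₂*f‖`
with `a ≥ 0`, `0 ≤ b < 1`, and `{(W i, v i)}` is a `K₁`-fusion frame with bounds `A, B`,
then it is a `K₂`-fusion frame with bounds `A((1−b)/(1+a))²` and `B`. -/
theorem kfusion_perturb_operator
    {H : Type*} [NormedAddCommGroup H] [InnerProductSpace ℂ H] [CompleteSpace H]
    {I : Type*}
    (K₁ K₂ : H →L[ℂ] H) (a b : ℝ) (ha : 0 ≤ a) (hb0 : 0 ≤ b) (hb1 : b < 1)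
    (hpert : ∀ f : H,
      ‖ContinuousLinearMap.adjoint K₁ f - ContinuousLinearMap.adjoint K₂ f‖ ≤
        a * ‖ContinuousLinearMap.adjoint K₁ f‖ + b * ‖ContinuousLinearMap.adjoint K₂ f‖)
    (W : I → Submodule ℂ H) [∀ i, HasOrthogonalProjection (W i)]
    (v : I → ℝ) (hv : ∀ i, 0 < v i)
    (A B : ℝ) (hA : 0 < A) (hB : 0 < B)
    (hlow : ∀ f : H, A * ‖ContinuousLinearMap.adjoint K₁ f‖ ^ 2 ≤
      ∑' i, (v i) ^ 2 * ‖(orthogonalProjection (W i) f : H)‖ ^ 2)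
    (hup : ∀ f : H, (∑' i, (v i) ^ 2 * ‖(orthogonalProjection (W i) f : H)‖ ^ 2) ≤ B * ‖f‖ ^ 2) :
    ∀ f : H,
      A * ((1 - b) / (1 + a)) ^ 2 * ‖ContinuousLinearMap.adjoint K₂ f‖ ^ 2 ≤
        ∑' i, (v i) ^ 2 * ‖(orthogonalProjection (W i) f : H)‖ ^ 2 ∧
      (∑' i, (v i) ^ 2 * ‖(orthogonalProjection (W i) f : H)‖ ^ 2) ≤ B * ‖f‖ ^ 2 :=
  kfusion_perturb_operator_general K₁ K₂ a b ha hb1 hpert W v A B hA hlow hup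
end

section
/- Let K₁, K₂ ∈ L(H) and 0 ≤ a, b < 1 with ‖(K₁* − K₂*)f‖ ≤ a‖K₁*f‖ + b‖K₂*f‖ for all f ∈ H. Then a weighted collection {(W_i, v_i)}_{i∈I} of closed subspaces of H is a K₁-fusion frame for H if and only if it is a K₂-fusion frame for H. -/
open Submodule ContinuousLinearMap

/-!
The perturbation inequality together with the triangle inequality gives
`(1 - b) ‖K₂* f‖ ≤ (1 + a) ‖K₁* f‖`, and symmetrically `(1 - a) ‖K₁* f‖ ≤ (1 + b) ‖K₂* f‖`.
So the two lower-bound norms are comparable, `‖K₂* f‖ ≤ c ‖K₁* f‖`; a lower frame bound `A`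
for `K₁` becomes `A / c²` for `K₂` (and symmetrically), while the upper bound does not involve `K`.
-/

theorem norm_le_div_mul_norm_of_norm_sub_le {E : Type*} [SeminormedAddCommGroup E] {x y : E}
    {a b : ℝ} (hb : b < 1) (h : ‖x - y‖ ≤ a * ‖x‖ + b * ‖y‖) :
    ‖y‖ ≤ (1 + a) / (1 - b) * ‖x‖ := by
  have htri : ‖y‖ ≤ ‖x‖ + ‖x - y‖ := by
    simpa using norm_sub_le x (x - y)
  rw [div_mul_eq_mul_div, le_div_iff₀ (by linarith)]
  nlinarith [norm_nonneg x]

/-- The lower and upper inequalities of a `K`-fusion frame, with `g f = ‖K* f‖` and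
`S f = ∑' i, v i ^ 2 * ‖P_{W i} f‖ ^ 2`. -/
def HasFrameBounds {H : Type*} [Norm H] (g S : H → ℝ) : Prop :=
  ∃ A B : ℝ, 0 < A ∧ 0 < B ∧ ∀ f : H, A * g f ^ 2 ≤ S f ∧ S f ≤ B * ‖f‖ ^ 2

theorem HasFrameBounds.of_le_mul {H : Type*} [Norm H] {g₁ g₂ S : H → ℝ}
    (h : HasFrameBounds g₁ S) {c : ℝ} (hc : 0 < c) (hg₂ : ∀ f, 0 ≤ g₂ f)
    (hle : ∀ f, g₂ f ≤ c * g₁ f) : HasFrameBounds g₂ S := by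
  obtain ⟨A, B, hA, hB, hbounds⟩ := h
  refine ⟨A / c ^ 2, B, by positivity, hB, fun f => ⟨?_, (hbounds f).2⟩⟩
  have hsq : g₂ f ^ 2 ≤ c ^ 2 * g₁ f ^ 2 := by
    rw [← mul_pow]
    exact pow_le_pow_left₀ (hg₂ f) (hle f) 2
  calc A / c ^ 2 * g₂ f ^ 2 ≤ A / c ^ 2 * (c ^ 2 * g₁ f ^ 2) := by gcongr
    _ = A * g₁ f ^ 2 := by field_simp
    _ ≤ S f := (hbounds f).1

theorem kfusion_perturb_iff_general
    {H : Type*} [NormedAddCommGroup H] [InnerProductSpace ℂ H] [CompleteSpace H]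
    {I : Type*}
    (K₁ K₂ : H →L[ℂ] H) (a b : ℝ)
    (ha0 : 0 ≤ a) (ha1 : a < 1) (hb0 : 0 ≤ b) (hb1 : b < 1)
    (hpert : ∀ f : H,
      ‖ContinuousLinearMap.adjoint K₁ f - ContinuousLinearMap.adjoint K₂ f‖ ≤
        a * ‖ContinuousLinearMap.adjoint K₁ f‖ + b * ‖ContinuousLinearMap.adjoint K₂ f‖)
    (W : I → Submodule ℂ H) [∀ i, HasOrthogonalProjection (W i)]
    (v : I → ℝ) :
    (∃ A B : ℝ, 0 < A ∧ 0 < B ∧ ∀ f : H,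
        A * ‖ContinuousLinearMap.adjoint K₁ f‖ ^ 2 ≤
          ∑' i, (v i) ^ 2 * ‖(orthogonalProjection (W i) f : H)‖ ^ 2 ∧
        (∑' i, (v i) ^ 2 * ‖(orthogonalProjection (W i) f : H)‖ ^ 2) ≤ B * ‖f‖ ^ 2) ↔
    (∃ A B : ℝ, 0 < A ∧ 0 < B ∧ ∀ f : H,
        A * ‖ContinuousLinearMap.adjoint K₂ f‖ ^ 2 ≤
          ∑' i, (v i) ^ 2 * ‖(orthogonalProjection (W i) f : H)‖ ^ 2 ∧
        (∑' i, (v i) ^ 2 * ‖(orthogonalProjection (W i) f : H)‖ ^ 2) ≤ B * ‖f‖ ^ 2) := by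
  have h21 (f : H) : ‖adjoint K₂ f‖ ≤ (1 + a) / (1 - b) * ‖adjoint K₁ f‖ :=
    norm_le_div_mul_norm_of_norm_sub_le hb1 (hpert f)
  have h12 (f : H) : ‖adjoint K₁ f‖ ≤ (1 + b) / (1 - a) * ‖adjoint K₂ f‖ := by
    refine norm_le_div_mul_norm_of_norm_sub_le ha1 ?_
    rw [norm_sub_rev, add_comm]
    exact hpert f
  constructor
  · intro h
    exact HasFrameBounds.of_le_mul h (by apply div_pos <;> linarith) (fun _ => norm_nonneg _) h21
  · intro h
    exact HasFrameBounds.of_le_mul h (by apply div_pos <;> linarith) (fun _ => norm_nonneg _) h12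

/-- Under the symmetric perturbation condition with `0 ≤ a, b < 1`,
a weighted collection is a `K₁`-fusion frame iff it is a `K₂`-fusion frame. -/
theorem kfusion_perturb_iff
    {H : Type*} [NormedAddCommGroup H] [InnerProductSpace ℂ H] [CompleteSpace H]
    {I : Type*}
    (K₁ K₂ : H →L[ℂ] H) (a b : ℝ)
    (ha0 : 0 ≤ a) (ha1 : a < 1) (hb0 : 0 ≤ b) (hb1 : b < 1)
    (hpert : ∀ f : H,
      ‖ContinuousLinearMap.adjoint K₁ f - ContinuousLinearMap.adjoint K₂ f‖ ≤
        a * ‖ContinuousLinearMap.adjoint K₁ f‖ + b * ‖ContinuousLinearMap.adjoint K₂ f‖)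
    (W : I → Submodule ℂ H) [∀ i, HasOrthogonalProjection (W i)]
    (v : I → ℝ) (hv : ∀ i, 0 < v i) :
    (∃ A B : ℝ, 0 < A ∧ 0 < B ∧ ∀ f : H,
        A * ‖ContinuousLinearMap.adjoint K₁ f‖ ^ 2 ≤
          ∑' i, (v i) ^ 2 * ‖(orthogonalProjection (W i) f : H)‖ ^ 2 ∧
        (∑' i, (v i) ^ 2 * ‖(orthogonalProjection (W i) f : H)‖ ^ 2) ≤ B * ‖f‖ ^ 2) ↔
    (∃ A B : ℝ, 0 < A ∧ 0 < B ∧ ∀ f : H,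
        A * ‖ContinuousLinearMap.adjoint K₂ f‖ ^ 2 ≤
          ∑' i, (v i) ^ 2 * ‖(orthogonalProjection (W i) f : H)‖ ^ 2 ∧
        (∑' i, (v i) ^ 2 * ‖(orthogonalProjection (W i) f : H)‖ ^ 2) ≤ B * ‖f‖ ^ 2) :=
  kfusion_perturb_iff_general K₁ K₂ a b ha0 ha1 hb0 hb1 hpert W v
end

section
/- Let K ∈ L(H) and {(W_i, v_i)}_{i∈I} be a K-fusion frame for H with bounds A, B, and suppose 0 ≤ a, b < 1 satisfy ‖K*f − f‖ ≤ a‖K*f‖ + b‖f‖ for all f ∈ H. Then {(W_i, v_i)}_{i∈I} is a fusion frame for H, with lower bound A((1−b)/(1+a))². -/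
open Submodule ContinuousLinearMap

theorem one_sub_mul_norm_le_one_add_mul_norm {E : Type*} [SeminormedAddCommGroup E]
    {a b : ℝ} {x y : E} (h : ‖x - y‖ ≤ a * ‖x‖ + b * ‖y‖) :
    (1 - b) * ‖y‖ ≤ (1 + a) * ‖x‖ := by
  have := norm_sub_norm_le y x
  rw [norm_sub_rev] at this
  linarith

theorem kfusion_to_fusion_general
    {H : Type*} [NormedAddCommGroup H] [InnerProductSpace ℂ H] [CompleteSpace H]
    {I : Type*}
    (K : H →L[ℂ] H) (a b : ℝ)
    (ha0 : 0 ≤ a) (hb1 : b < 1)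
    (hpert : ∀ f : H,
      ‖ContinuousLinearMap.adjoint K f - f‖ ≤ a * ‖ContinuousLinearMap.adjoint K f‖ + b * ‖f‖)
    (W : I → Submodule ℂ H) [∀ i, HasOrthogonalProjection (W i)]
    (v : I → ℝ)
    (A B : ℝ) (hA : 0 < A)
    (hlow : ∀ f : H, A * ‖ContinuousLinearMap.adjoint K f‖ ^ 2 ≤
      ∑' i, (v i) ^ 2 * ‖(orthogonalProjection (W i) f : H)‖ ^ 2)
    (hup : ∀ f : H, (∑' i, (v i) ^ 2 * ‖(orthogonalProjection (W i) f : H)‖ ^ 2) ≤ B * ‖f‖ ^ 2) :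
    ∀ f : H,
      A * ((1 - b) / (1 + a)) ^ 2 * ‖f‖ ^ 2 ≤
        ∑' i, (v i) ^ 2 * ‖(orthogonalProjection (W i) f : H)‖ ^ 2 ∧
      (∑' i, (v i) ^ 2 * ‖(orthogonalProjection (W i) f : H)‖ ^ 2) ≤ B * ‖f‖ ^ 2 := by
  intro f
  refine ⟨?_, hup f⟩
  have hc : 0 ≤ (1 - b) / (1 + a) := div_nonneg (by linarith) (by linarith)
  have hKf : (1 - b) / (1 + a) * ‖f‖ ≤ ‖adjoint K f‖ := by
    rw [div_mul_eq_mul_div, div_le_iff₀ (by linarith), mul_comm ‖adjoint K f‖]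
    exact one_sub_mul_norm_le_one_add_mul_norm (hpert f)
  calc A * ((1 - b) / (1 + a)) ^ 2 * ‖f‖ ^ 2
      = A * ((1 - b) / (1 + a) * ‖f‖) ^ 2 := by ring
    _ ≤ A * ‖adjoint K f‖ ^ 2 := by gcongr
    _ ≤ _ := hlow f

/-- If `{(W i, v i)}` is a `K`-fusion frame with bounds `A, B` and
`‖K*f − f‖ ≤ a‖K*f‖ + b‖f‖` with `0 ≤ a, b < 1`, then it is a fusion frame,
with lower bound `A((1−b)/(1+a))²`. -/
theorem kfusion_to_fusion
    {H : Type*} [NormedAddCommGroup H] [InnerProductSpace ℂ H] [CompleteSpace H]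
    {I : Type*}
    (K : H →L[ℂ] H) (a b : ℝ)
    (ha0 : 0 ≤ a) (ha1 : a < 1) (hb0 : 0 ≤ b) (hb1 : b < 1)
    (hpert : ∀ f : H,
      ‖ContinuousLinearMap.adjoint K f - f‖ ≤ a * ‖ContinuousLinearMap.adjoint K f‖ + b * ‖f‖)
    (W : I → Submodule ℂ H) [∀ i, HasOrthogonalProjection (W i)]
    (v : I → ℝ) (hv : ∀ i, 0 < v i)
    (A B : ℝ) (hA : 0 < A) (hB : 0 < B)
    (hlow : ∀ f : H, A * ‖ContinuousLinearMap.adjoint K f‖ ^ 2 ≤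
      ∑' i, (v i) ^ 2 * ‖(orthogonalProjection (W i) f : H)‖ ^ 2)
    (hup : ∀ f : H, (∑' i, (v i) ^ 2 * ‖(orthogonalProjection (W i) f : H)‖ ^ 2) ≤ B * ‖f‖ ^ 2) :
    ∀ f : H,
      A * ((1 - b) / (1 + a)) ^ 2 * ‖f‖ ^ 2 ≤
        ∑' i, (v i) ^ 2 * ‖(orthogonalProjection (W i) f : H)‖ ^ 2 ∧
      (∑' i, (v i) ^ 2 * ‖(orthogonalProjection (W i) f : H)‖ ^ 2) ≤ B * ‖f‖ ^ 2 :=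
  kfusion_to_fusion_general K a b ha0 hb1 hpert W v A B hA hlow hup
end

section
/- Let {(W_i, v_i)}_{i∈I} be a weighted collection of closed subspaces of H and K ∈ L(H). If there exists B' > 0 with Σ_i v_i²‖P_{V_i}f‖² ≤ B'‖f‖² for all f (so the synthesis operator T_V : (⊕_i V_i)_{ℓ²} → H, {f_i} ↦ Σ_i v_i f_i, is well-defined and bounded) and R(K) ⊆ R(T_V), then there exists A > 0 with A‖K*f‖² ≤ Σ_i v_i²‖P_{V_i}f‖² for all f ∈ H; i.e., {(V_i, v_i)} is a K-fusion frame for H. -/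
open Submodule ContinuousLinearMap

/-!
If `R(K) ⊆ R(T)`, pick for every `x` some `g x` with `T (g x) = K x`. Then
`⟪K† f, x⟫ = ⟪T† f, g x⟫`, so the functionals `‖T† f‖⁻¹ • ⟪K† f, ·⟫` are bounded at each `x`
by `‖g x‖`, independently of `f`. Banach–Steinhaus bounds their norms uniformly, which gives
`‖K† f‖ ≤ C ‖T† f‖`; squaring and `‖TV† f‖² = Σ_i v_i² ‖P_{V_i} f‖²` give the lower frame bound.
-/

section Douglas

variable {𝕜 : Type*} [RCLike 𝕜]
  {E : Type*} [NormedAddCommGroup E] [InnerProductSpace 𝕜 E] [CompleteSpace E]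
  {G : Type*} [NormedAddCommGroup G] [InnerProductSpace 𝕜 G] [CompleteSpace G]
  {H : Type*} [NormedAddCommGroup H] [InnerProductSpace 𝕜 H] [CompleteSpace H]

theorem ContinuousLinearMap.exists_norm_adjoint_le_of_range_subset
    (K : E →L[𝕜] H) (T : G →L[𝕜] H) (hrange : Set.range K ⊆ Set.range T) :
    ∃ C : ℝ, 0 < C ∧ ∀ f : H, ‖adjoint K f‖ ≤ C * ‖adjoint T f‖ := by
  choose g hg using fun x => hrange ⟨x, rfl⟩
  have inner_adjoint_eq (f : H) (x : E) :
      inner 𝕜 (adjoint K f) x = inner 𝕜 (adjoint T f) (g x) := by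
    rw [adjoint_inner_left, adjoint_inner_left, hg]
  let φ : H → E →L[𝕜] 𝕜 := fun f => (‖adjoint T f‖⁻¹ : 𝕜) • innerSL 𝕜 (adjoint K f)
  have pointwise_bound (x : E) (f : H) : ‖φ f x‖ ≤ ‖g x‖ := by
    -- when `T† f = 0` the junk value `0⁻¹ = 0` makes `φ f = 0`
    calc ‖φ f x‖ = ‖adjoint T f‖⁻¹ * ‖inner 𝕜 (adjoint T f) (g x)‖ := by
          simp [φ, inner_adjoint_eq]
      _ ≤ ‖adjoint T f‖⁻¹ * (‖adjoint T f‖ * ‖g x‖) := by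
          gcongr; exact norm_inner_le_norm _ _
      _ ≤ ‖g x‖ := by
          rw [← mul_assoc]
          exact mul_le_of_le_one_left (norm_nonneg _) (inv_mul_le_one_of_le₀ le_rfl (norm_nonneg _))
  obtain ⟨C, hC⟩ := banach_steinhaus fun x => ⟨‖g x‖, pointwise_bound x⟩
  refine ⟨max C 1, by positivity, fun f => ?_⟩
  rcases eq_or_ne (adjoint T f) 0 with hTf | hTf
  · have : adjoint K f = 0 := by
      simpa [hTf] using inner_adjoint_eq f (adjoint K f)
    simp [this, hTf]
  · have hφ : ‖φ f‖ = ‖adjoint T f‖⁻¹ * ‖adjoint K f‖ := by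
      simp [φ, norm_smul, innerSL_apply_norm]
    have : ‖adjoint T f‖⁻¹ * ‖adjoint K f‖ ≤ max C 1 := hφ ▸ (hC f).trans (le_max_left _ _)
    rwa [inv_mul_le_iff₀ (norm_pos_iff.mpr hTf), mul_comm] at this

end Douglas

theorem kfusion_of_range_subset_general
    {H : Type*} [NormedAddCommGroup H] [InnerProductSpace ℂ H] [CompleteSpace H]
    {G : Type*} [NormedAddCommGroup G] [InnerProductSpace ℂ G] [CompleteSpace G]
    {I : Type*}
    (K : H →L[ℂ] H)
    (V : I → Submodule ℂ H) [∀ i, HasOrthogonalProjection (V i)]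
    (v : I → ℝ)
    (TV : G →L[ℂ] H)
    (hTV : ∀ f : H, ‖ContinuousLinearMap.adjoint TV f‖ ^ 2 =
      ∑' i, (v i) ^ 2 * ‖(orthogonalProjection (V i) f : H)‖ ^ 2)
    (hrange : Set.range K ⊆ Set.range TV) :
    ∃ A : ℝ, 0 < A ∧ ∀ f : H,
      A * ‖ContinuousLinearMap.adjoint K f‖ ^ 2 ≤
        ∑' i, (v i) ^ 2 * ‖(orthogonalProjection (V i) f : H)‖ ^ 2 := by
  obtain ⟨C, hC, hKT⟩ := K.exists_norm_adjoint_le_of_range_subset TV hrange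
  refine ⟨(C ^ 2)⁻¹, by positivity, fun f => ?_⟩
  rw [← hTV, inv_mul_le_iff₀ (by positivity), ← mul_pow]
  exact pow_le_pow_left₀ (norm_nonneg _) (hKT f) 2

/-- If the synthesis operator `TV` of a fusion Bessel collection
`{(V i, v i)}` (characterized by `‖TV* f‖² = Σ_i v i² ‖P_{V i} f‖²`) satisfies
`R(K) ⊆ R(TV)`, then `{(V i, v i)}` is a `K`-fusion frame: there is `A > 0` with
`A‖K*f‖² ≤ Σ_i v i² ‖P_{V i} f‖²` for all `f`. -/
theorem kfusion_of_range_subset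
    {H : Type*} [NormedAddCommGroup H] [InnerProductSpace ℂ H] [CompleteSpace H]
    {G : Type*} [NormedAddCommGroup G] [InnerProductSpace ℂ G] [CompleteSpace G]
    {I : Type*}
    (K : H →L[ℂ] H)
    (V : I → Submodule ℂ H) [∀ i, HasOrthogonalProjection (V i)]
    (v : I → ℝ) (hv : ∀ i, 0 < v i)
    (B' : ℝ) (hB' : 0 < B')
    (hbessel : ∀ f : H,
      (∑' i, (v i) ^ 2 * ‖(orthogonalProjection (V i) f : H)‖ ^ 2) ≤ B' * ‖f‖ ^ 2)
    (TV : G →L[ℂ] H)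
    (hTV : ∀ f : H, ‖ContinuousLinearMap.adjoint TV f‖ ^ 2 =
      ∑' i, (v i) ^ 2 * ‖(orthogonalProjection (V i) f : H)‖ ^ 2)
    (hrange : Set.range K ⊆ Set.range TV) :
    ∃ A : ℝ, 0 < A ∧ ∀ f : H,
      A * ‖ContinuousLinearMap.adjoint K f‖ ^ 2 ≤
        ∑' i, (v i) ^ 2 * ‖(orthogonalProjection (V i) f : H)‖ ^ 2 :=
  kfusion_of_range_subset_general K V v TV hTV hrange
end
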